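/- The family TL with the state operations is a model of the parameterized theory of single-bit mutable state with local values: for all n, i, j : Bool and all elements of the appropriate levels, getT n (putT n false z) (putT n true z) = z; putT n i (putT n j z) = putT n j z; putT n i (getT n x0 x1) = putT n i (if i then x1 else x0); localT n i (closeT n x) = x; localT n i (getT (n+1) x0 x1) = localT n i (if i then x1 else x0); localT n i (putT (n+1) j z) = localT n j z; and putT (n+1) i (closeT n z) = closeT n z. -/
import Mathlib

namespace Stmt5

/-- `TL A 0 = Bool → A × Bool` and `TL A (n+1) = Bool → TL A n`. -/
def TL (A : Type) : ℕ → Type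
  | 0 => Bool → A × Bool
  | n + 1 => Bool → TL A n

/-- `get` branches on the stored bit. -/
def getT (A : Type) : ∀ n, TL A n → TL A n → TL A n
  | 0, f, g => fun s => if s then g s else f s
  | _ + 1, f, g => fun s => if s then g s else f s

/-- `put i` overwrites the state with `i`. -/
def putT (A : Type) : ∀ n, Bool → TL A n → TL A n
  | 0, i, f => fun _ => f i
  | _ + 1, i, f => fun _ => f i

/-- `local i` opens a scope with local state initialized to `i`. -/
def localT (A : Type) (n : ℕ) (i : Bool) (f : TL A (n + 1)) : TL A n := f i

/-- `close` closes a scope, discarding the local state. -/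
def closeT (A : Type) (n : ℕ) (x : TL A n) : TL A (n + 1) := fun _ => x

theorem stmt_5 (A : Type) :
    (∀ n (z : TL A n),
      getT A n (putT A n false z) (putT A n true z) = z) ∧
    (∀ n (i j : Bool) (z : TL A n),
      putT A n i (putT A n j z) = putT A n j z) ∧
    (∀ n (i : Bool) (x0 x1 : TL A n),
      putT A n i (getT A n x0 x1) = putT A n i (if i then x1 else x0)) ∧
    (∀ n (i : Bool) (x : TL A n),
      localT A n i (closeT A n x) = x) ∧
    (∀ n (i : Bool) (x0 x1 : TL A (n + 1)),
      localT A n i (getT A (n + 1) x0 x1) = localT A n i (if i then x1 else x0)) ∧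
    (∀ n (i j : Bool) (z : TL A (n + 1)),
      localT A n i (putT A (n + 1) j z) = localT A n j z) ∧
    (∀ n (i : Bool) (z : TL A n),
      putT A (n + 1) i (closeT A n z) = closeT A n z) := by
  refine ⟨?_, ?_, ?_, ?_, ?_, ?_, ?_⟩
  · rintro (_ | n) z <;> funext s <;> cases s <;> rfl
  · rintro (_ | n) i j z <;> rfl
  · rintro (_ | n) i x0 x1 <;> cases i <;> rfl
  · intro n i x; rfl
  · intro n i x0 x1; cases i <;> rfl
  · intro n i j z; rfl
  · intro n i z; rfl

end Stmt5
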